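/- arXiv:2503.20404 — 3 statements merged into one kernel-verified Lean document; each statement's English description precedes it below -/
import Mathlib

section
/- Let F ⊊ G be nonempty faces of a convex set in a finite-dimensional real vector space with F strictly contained in G. Then the dimension of the affine span of F is strictly less than the dimension of the affine span of G. -/
variable {V : Type*} [NormedAddCommGroup V] [NormedSpace ℝ V] [FiniteDimensional ℝ V]

/-- `F` is a face (extreme subset) of the convex set `B`. -/
def IsFace (B F : Set V) : Prop :=
  F ⊆ B ∧ Convex ℝ F ∧
    ∀ u ∈ B, ∀ w ∈ B, ∀ t : ℝ, t ∈ Set.Ioo (0 : ℝ) 1 →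
      t • u + (1 - t) • w ∈ F → u ∈ F ∧ w ∈ F

/-!
A nonempty face `F` of `B` is cut out of `B` by its own affine span: given `x ∈ B` in that span,
pick `y` in the intrinsic interior of `F`; the segment from `x` through `y` can be prolonged a
little beyond `y` inside `F`, to some `z`, and since `y` lies in the open segment `(x, z)` with
`y ∈ F`, extremality puts `x` in `F`. Hence a face `F ⊊ G` cannot have the same affine span as
`G`, so its direction is a proper subspace of that of `G`.
-/

open Topology

lemma exists_mem_openSegment_of_mem_intrinsicInterior {E : Type*} [AddCommGroup E] [Module ℝ E]
    [TopologicalSpace E] [IsTopologicalAddGroup E] [ContinuousSMul ℝ E] {s : Set E} {x y : E}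
    (hy : y ∈ intrinsicInterior ℝ s) (hx : x ∈ affineSpan ℝ s) :
    ∃ z ∈ s, y ∈ openSegment ℝ x z := by
  obtain ⟨y', hy', rfl⟩ := mem_intrinsicInterior.1 hy
  let line : ℝ → affineSpan ℝ s := fun t ↦
    ⟨AffineMap.lineMap (y' : E) x t, AffineMap.lineMap_mem _ y'.2 hx⟩
  have hline : Continuous line := AffineMap.lineMap_continuous.subtype_mk _
  have hline0 : line 0 = y' := Subtype.ext (AffineMap.lineMap_apply_zero _ _)
  -- for `t < 0`, `lineMap y x t` lies on the far side of `y` from `x`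
  have hnear : ∀ᶠ t in 𝓝[<] (0 : ℝ), AffineMap.lineMap (y' : E) x t ∈ s :=
    nhdsWithin_le_nhds <| hline.continuousAt.preimage_mem_nhds <|
      hline0 ▸ mem_interior_iff_mem_nhds.1 hy'
  obtain ⟨t, hts, ht : t < 0⟩ := (hnear.and self_mem_nhdsWithin).exists
  have h1t : 0 < 1 - t := by linarith
  refine ⟨_, hts, -t / (1 - t), 1 / (1 - t), div_pos (neg_pos.2 ht) h1t, div_pos one_pos h1t,
    by field_simp; ring, ?_⟩
  rw [AffineMap.lineMap_apply_module']
  match_scalars <;> field_simp <;> ring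

lemma IsFace.mem_of_mem_affineSpan {B F : Set V} (hF : IsFace B F) (hFne : F.Nonempty) {x : V}
    (hxB : x ∈ B) (hx : x ∈ affineSpan ℝ F) : x ∈ F := by
  obtain ⟨y, hy⟩ := hFne.intrinsicInterior hF.2.1
  obtain ⟨z, hzF, a, b, ha, hb, hab, hxyz⟩ := exists_mem_openSegment_of_mem_intrinsicInterior hy hx
  refine (hF.2.2 x hxB z (hF.1 hzF) a ⟨ha, by linarith⟩ ?_).1
  rw [← hab, add_sub_cancel_left, hxyz]
  exact intrinsicInterior_subset hy

theorem strict_face_dim_lt_general (B F G : Set V)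
    (hF : IsFace B F) (hG : IsFace B G) (hFne : F.Nonempty)
    (hFG : F ⊆ G) (hne : F ≠ G) :
    Module.finrank ℝ (affineSpan ℝ F).direction <
      Module.finrank ℝ (affineSpan ℝ G).direction := by
  have hspan_ne : affineSpan ℝ F ≠ affineSpan ℝ G := fun h ↦ hne <| hFG.antisymm fun x hx ↦
    hF.mem_of_mem_affineSpan hFne (hG.1 hx) (h ▸ subset_affineSpan ℝ G hx)
  have hspan_lt : affineSpan ℝ F < affineSpan ℝ G := (affineSpan_mono ℝ hFG).lt_of_ne hspan_ne
  exact Submodule.finrank_lt_finrank_of_lt <|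
    AffineSubspace.direction_lt_of_nonempty hspan_lt ((affineSpan_nonempty ℝ).2 hFne)

theorem strict_face_dim_lt (B F G : Set V) (hB : Convex ℝ B)
    (hF : IsFace B F) (hG : IsFace B G) (hFne : F.Nonempty) (hGne : G.Nonempty)
    (hFG : F ⊆ G) (hne : F ≠ G) :
    Module.finrank ℝ (affineSpan ℝ F).direction <
      Module.finrank ℝ (affineSpan ℝ G).direction :=
  strict_face_dim_lt_general B F G hF hG hFne hFG hne
end

section
/- Let u, w be unit vectors in a real normed space and t ∈ (0,1) such that ‖tu + (1−t)w‖ = 1. Then ‖su + (1−s)w‖ = 1 for every s ∈ [0,1], i.e. the entire segment from u to w lies on the unit sphere. -/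
variable {V : Type*} [NormedAddCommGroup V] [NormedSpace ℝ V]

theorem segment_on_unit_sphere (u w : V) (hu : ‖u‖ = 1) (hw : ‖w‖ = 1)
    (t : ℝ) (ht : t ∈ Set.Ioo (0 : ℝ) 1) (h : ‖t • u + (1 - t) • w‖ = 1) :
    ∀ s ∈ Set.Icc (0 : ℝ) 1, ‖s • u + (1 - s) • w‖ = 1 := by
  obtain ⟨ht0, ht1⟩ := ht
  rintro s ⟨hs0, hs1⟩
  have hub : ∀ r : ℝ, 0 ≤ r → r ≤ 1 → ‖r • u + (1 - r) • w‖ ≤ 1 := by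
    intro r hr0 hr1
    calc ‖r • u + (1 - r) • w‖ ≤ ‖r • u‖ + ‖(1 - r) • w‖ := norm_add_le _ _
      _ = |r| * ‖u‖ + |1 - r| * ‖w‖ := by rw [norm_smul, norm_smul]; rfl
      _ = 1 := by rw [hu, hw, abs_of_nonneg hr0, abs_of_nonneg (by linarith)]; ring
  refine le_antisymm (hub s hs0 hs1) ?_
  rcases le_or_gt s t with hst | hst
  · -- s ≤ t < 1, write t = λ s + (1-λ)·1 with λ = (1-t)/(1-s)
    have hs1' : s < 1 := lt_of_le_of_lt hst ht1
    have h1s : (0:ℝ) < 1 - s := by linarith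
    set l : ℝ := (1 - t) / (1 - s) with hl
    have hl0 : 0 < l := div_pos (by linarith) h1s
    have hl1 : l ≤ 1 := by
      rw [div_le_one h1s]; linarith
    have key : t • u + (1 - t) • w = l • (s • u + (1 - s) • w) + (1 - l) • u := by
      have e1 : l * (1 - s) = 1 - t := div_mul_cancel₀ _ h1s.ne'
      match_scalars <;> nlinarith [e1]
    have hle : (1:ℝ) ≤ l * ‖s • u + (1 - s) • w‖ + (1 - l) := by
      calc (1:ℝ) = ‖t • u + (1 - t) • w‖ := h.symm
        _ ≤ ‖l • (s • u + (1 - s) • w)‖ + ‖(1 - l) • u‖ := by rw [key]; exact norm_add_le _ _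
        _ = l * ‖s • u + (1 - s) • w‖ + (1 - l) := by
            rw [norm_smul, norm_smul, hu, Real.norm_eq_abs, Real.norm_eq_abs,
              abs_of_nonneg hl0.le, abs_of_nonneg (by linarith)]; ring
    have : l ≤ l * ‖s • u + (1 - s) • w‖ := by linarith
    have := (le_mul_iff_one_le_right hl0).mp this
    linarith
  · -- t < s, write t = λ s with λ = t/s
    have hs0' : 0 < s := lt_trans ht0 hst
    set l : ℝ := t / s with hl
    have hl0 : 0 < l := div_pos ht0 hs0'
    have hl1 : l ≤ 1 := by rw [div_le_one hs0']; linarith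
    have key : t • u + (1 - t) • w = l • (s • u + (1 - s) • w) + (1 - l) • w := by
      have e1 : l * s = t := by rw [hl]; field_simp
      match_scalars <;> nlinarith [e1]
    have hle : (1:ℝ) ≤ l * ‖s • u + (1 - s) • w‖ + (1 - l) := by
      calc (1:ℝ) = ‖t • u + (1 - t) • w‖ := h.symm
        _ ≤ ‖l • (s • u + (1 - s) • w)‖ + ‖(1 - l) • w‖ := by rw [key]; exact norm_add_le _ _
        _ = l * ‖s • u + (1 - s) • w‖ + (1 - l) := by
            rw [norm_smul, norm_smul, hw, Real.norm_eq_abs, Real.norm_eq_abs,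
              abs_of_nonneg hl0.le, abs_of_nonneg (by linarith)]; ring
    have : l ≤ l * ‖s • u + (1 - s) • w‖ := by linarith
    have := (le_mul_iff_one_le_right hl0).mp this
    linarith
end

section
/- Let {f_i}_{i ∈ I} be a family of C¹ maps f_i : [0, ε) × U → ℝᵏ with f_i(0, x) = x, such that the family is compact in the C¹ topology on compact subsets, and let V = {∂f_i/∂t(0, 0) | i ∈ I}. Suppose α : [0, T) → ℝᵏ satisfies α(0) = 0, is differentiable at 0, and for each t ∈ (0, T) there exist t₁, t₂ ≥ 0 with t₁ + t₂ = t and indices i₁, i₂ ∈ I such that α(t) = f_{i₁}(t₁, f_{i₂}(t₂, 0)). Then α′(0) lies in the closed convex hull of V. -/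
/-!
Sequential C¹-compactness makes both the family `f i` and its derivatives equicontinuous at
the origin, so the first-order expansion `f i (s, x) = x + s • wᵢ + o(s)`, with
`wᵢ = ∂ₜ f i (0, 0)`, holds uniformly in `i` and in `x` near `0`. Composing two such
expansions gives `α t = t₁ • w_{i₁} + t₂ • w_{i₂} + o(t)`, so the difference quotient `α t / t`
is `o(1)`-close to the convex combination `(t₁ / t) • w_{i₁} + (t₂ / t) • w_{i₂}`; its limit
`α' 0` therefore lies in the closed convex hull.
-/

open Set Filter Topology

theorem equicontinuousWithinAt_of_forall_subseq_tendstoUniformlyOn {X Y ι : Type*}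
    [TopologicalSpace X] [FirstCountableTopology X] [PseudoMetricSpace Y]
    {F : ι → X → Y} {K : Set X} {x₀ : X} (hx₀ : x₀ ∈ K)
    (hcont : ∀ i, ContinuousWithinAt (F i) K x₀)
    (hsub : ∀ s : ℕ → ι, ∃ σ : ℕ → ℕ, StrictMono σ ∧ ∃ i₀,
      TendstoUniformlyOn (fun n => F (s (σ n))) (F i₀) atTop K) :
    EquicontinuousWithinAt F K x₀ := by
  intro V hV
  obtain ⟨δ, hδ, hδV⟩ := Metric.mem_uniformity_dist.mp hV
  by_contra hfar
  obtain ⟨x, hx, hxfar⟩ := exists_seq_forall_of_frequently (not_eventually.mp hfar)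
  have hxfar' : ∀ n, ∃ i, δ ≤ dist (F i x₀) (F i (x n)) := fun n => by
    by_contra! h
    exact hxfar n fun i => hδV (h i)
  choose s hs using hxfar'
  obtain ⟨σ, hσ, i₀, hunif⟩ := hsub s
  have hxσ := hx.comp hσ.tendsto_atTop
  have hnear : ∀ᶠ n in atTop, dist (F i₀ (x (σ n))) (F i₀ x₀) < δ / 3 :=
    ((hcont i₀).tendsto.comp hxσ).eventually (Metric.ball_mem_nhds _ (by positivity))
  have hmem : ∀ᶠ n in atTop, x (σ n) ∈ K := hxσ.eventually self_mem_nhdsWithin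
  obtain ⟨n, hn, hunif_n, hmem_n⟩ :=
    (hnear.and ((Metric.tendstoUniformlyOn_iff.mp hunif (δ / 3) (by positivity)).and hmem)).exists
  have hclose : dist (F (s (σ n)) x₀) (F (s (σ n)) (x (σ n))) < δ :=
    calc _ ≤ dist (F (s (σ n)) x₀) (F i₀ x₀) + dist (F i₀ x₀) (F i₀ (x (σ n)))
          + dist (F i₀ (x (σ n))) (F (s (σ n)) (x (σ n))) := dist_triangle4 _ _ _ _
      _ < δ / 3 + δ / 3 + δ / 3 := by
        gcongr
        · rw [dist_comm]; exact hunif_n x₀ hx₀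
        · rw [dist_comm]; exact hn
        · exact hunif_n _ hmem_n
      _ = δ := by ring
  exact (hs (σ n)).not_gt hclose

theorem EquicontinuousWithinAt.mono_of_mem_nhdsWithin {X Y ι : Type*} [TopologicalSpace X]
    [UniformSpace Y] {F : ι → X → Y} {S K : Set X} {x₀ : X}
    (hF : EquicontinuousWithinAt F K x₀) (hK : K ∈ 𝓝[S] x₀) :
    EquicontinuousWithinAt F S x₀ :=
  fun V hV => nhdsWithin_le_of_mem hK (hF V hV)

theorem exists_isCompact_subset_mem_nhdsWithin_Ico_prod {X : Type*} [TopologicalSpace X]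
    [LocallyCompactSpace X] {ε : ℝ} (hε : 0 < ε) {U : Set X} {x : X} (hU : U ∈ 𝓝 x) :
    ∃ K, IsCompact K ∧ K ⊆ Ico 0 ε ×ˢ U ∧ K ∈ 𝓝[Ico 0 ε ×ˢ U] ((0 : ℝ), x) := by
  obtain ⟨N, hN, hNU, hNc⟩ := local_compact_nhds hU
  refine ⟨Icc 0 (ε / 2) ×ˢ N, isCompact_Icc.prod hNc,
    prod_mono (Icc_subset_Ico_right (half_lt_self hε)) hNU, ?_⟩
  rw [nhdsWithin_prod_eq]
  exact prod_mem_prod (nhdsWithin_mono _ Ico_subset_Ici_self (Icc_mem_nhdsGE (half_pos hε)))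
    (mem_nhdsWithin_of_mem_nhds hN)

section
variable {E F : Type*} [NormedAddCommGroup E] [NormedSpace ℝ E] [NormedAddCommGroup F]
  [NormedSpace ℝ F]

theorem HasFDerivWithinAt.hasDerivWithinAt_comp_prodMk_const {g : ℝ × E → F}
    {L : ℝ × E →L[ℝ] F} {D : Set (ℝ × E)} {s : Set ℝ} {u : ℝ} {x : E}
    (hg : HasFDerivWithinAt g L D (u, x)) (hs : MapsTo (fun t => (t, x)) s D) :
    HasDerivWithinAt (fun t => g (t, x)) (L (1, 0)) s u :=
  hg.comp_hasDerivWithinAt u ((hasDerivWithinAt_id u s).prodMk (hasDerivWithinAt_const u s x)) hs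

theorem fderivWithin_Ico_prod_apply_one_zero {g : ℝ × E → F} {ε : ℝ} (hε : 0 < ε)
    {U : Set E} {x : E} (hx : x ∈ U) (hg : DifferentiableWithinAt ℝ g (Ico 0 ε ×ˢ U) (0, x)) :
    fderivWithin ℝ g (Ico 0 ε ×ˢ U) (0, x) (1, 0) = derivWithin (fun t => g (t, x)) (Ici 0) 0 := by
  have h := hg.hasFDerivWithinAt.hasDerivWithinAt_comp_prodMk_const
    (s := Ico 0 ε) fun t ht => ⟨ht, hx⟩
  exact ((h.mono_of_mem_nhdsWithin (Ico_mem_nhdsGE hε)).derivWithin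
    (uniqueDiffOn_Ici 0 0 self_mem_Ici)).symm

theorem eventually_norm_sub_sub_smul_derivWithin_le {ι : Type*} {ε : ℝ} (hε : 0 < ε)
    {U : Set E} (hU : U ∈ 𝓝 0) {f : ι → ℝ × E → F}
    (hf : ∀ i, DifferentiableOn ℝ (f i) (Ico 0 ε ×ˢ U))
    (hequi : EquicontinuousWithinAt (fun i => fderivWithin ℝ (f i) (Ico 0 ε ×ˢ U))
      (Ico 0 ε ×ˢ U) 0)
    {δ : ℝ} (hδ : 0 < δ) :
    ∀ᶠ p in 𝓝 (0 : ℝ × E), ∀ i, 0 ≤ p.1 →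
      ‖f i p - f i (0, p.2) - p.1 • derivWithin (fun t => f i (t, 0)) (Ici 0) 0‖ ≤ δ * p.1 := by
  set D := Ico 0 ε ×ˢ U
  have h0U : (0 : E) ∈ U := mem_of_mem_nhds hU
  obtain ⟨ρ, hρ, hclose⟩ := Metric.eventually_nhds_iff_ball.mp
    (eventually_nhdsWithin_iff.mp (hequi _ (Metric.dist_mem_uniformity hδ)))
  filter_upwards [Metric.ball_mem_nhds 0 (lt_min hρ hε),
    continuous_snd.continuousAt.preimage_mem_nhds hU] with ⟨s, x⟩ hp hx i hs
  simp only [mem_ball_zero_iff, lt_min_iff, Prod.norm_def, max_lt_iff, Real.norm_eq_abs,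
    abs_of_nonneg hs] at hp hx hs ⊢
  have hseg : ∀ u ∈ Icc 0 s, (u, x) ∈ Metric.ball 0 ρ ∧ (u, x) ∈ D := fun u hu =>
    ⟨by simp [Prod.norm_def, abs_of_nonneg hu.1, hu.2.trans_lt hp.1.1, hp.1.2],
      ⟨⟨hu.1, hu.2.trans_lt hp.2.1⟩, hx⟩⟩
  have hderiv : ∀ u ∈ Icc 0 s, HasDerivWithinAt
      (fun u => f i (u, x) - u • fderivWithin ℝ (f i) D 0 (1, 0))
      (fderivWithin ℝ (f i) D (u, x) (1, 0) - fderivWithin ℝ (f i) D 0 (1, 0)) (Icc 0 s) u :=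
    fun u hu => (((hf i _ (hseg u hu).2).hasFDerivWithinAt.hasDerivWithinAt_comp_prodMk_const
      fun t ht => (hseg t ht).2).sub ((hasDerivWithinAt_id u _).smul_const _)).congr_deriv
        (by simp)
  have hbound : ∀ u ∈ Ico 0 s,
      ‖fderivWithin ℝ (f i) D (u, x) (1, 0) - fderivWithin ℝ (f i) D 0 (1, 0)‖ ≤ δ := by
    intro u hu
    obtain ⟨hball, hD⟩ := hseg u (Ico_subset_Icc_self hu)
    have hdist : ‖fderivWithin ℝ (f i) D 0 - fderivWithin ℝ (f i) D (u, x)‖ < δ :=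
      by simpa [dist_eq_norm] using hclose _ hball hD i
    calc _ = ‖(fderivWithin ℝ (f i) D (u, x) - fderivWithin ℝ (f i) D 0) (1, 0)‖ := rfl
      _ ≤ ‖fderivWithin ℝ (f i) D (u, x) - fderivWithin ℝ (f i) D 0‖ * ‖((1 : ℝ), (0 : E))‖ :=
        ContinuousLinearMap.le_opNorm _ _
      _ ≤ δ := by rw [norm_sub_rev]; simpa [Prod.norm_def] using hdist.le
  have hmv := norm_image_sub_le_of_norm_deriv_le_segment' hderiv hbound s (right_mem_Icc.2 hs)
  rw [← fderivWithin_Ico_prod_apply_one_zero hε h0U (hf i _ ⟨⟨le_rfl, hε⟩, h0U⟩), Prod.mk_zero_zero]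
  simpa [sub_sub, add_comm] using hmv

theorem eventually_norm_two_flow_sub_le {ι : Type*} {ε : ℝ} (hε : 0 < ε)
    {U : Set E} (hU : U ∈ 𝓝 0) {f : ι → ℝ × E → E}
    (hf : ∀ i, DifferentiableOn ℝ (f i) (Ico 0 ε ×ˢ U)) (hfx : ∀ i, ∀ x ∈ U, f i (0, x) = x)
    (hequi : EquicontinuousWithinAt f (Ico 0 ε ×ˢ U) 0)
    (hequi' : EquicontinuousWithinAt (fun i => fderivWithin ℝ (f i) (Ico 0 ε ×ˢ U))
      (Ico 0 ε ×ˢ U) 0)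
    {δ : ℝ} (hδ : 0 < δ) :
    ∀ᶠ t in 𝓝 (0 : ℝ), ∀ t₁ t₂, 0 ≤ t₁ → 0 ≤ t₂ → t₁ + t₂ = t → ∀ i₁ i₂,
      ‖f i₁ (t₁, f i₂ (t₂, 0)) - t₁ • derivWithin (fun t => f i₁ (t, 0)) (Ici 0) 0
        - t₂ • derivWithin (fun t => f i₂ (t, 0)) (Ici 0) 0‖ ≤ δ * t := by
  have h0U : (0 : E) ∈ U := mem_of_mem_nhds hU
  obtain ⟨ρ, hρ, hρ_est⟩ := Metric.eventually_nhds_iff_ball.mp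
    ((eventually_norm_sub_sub_smul_derivWithin_le hε hU hf hequi' hδ).and
      (continuous_snd.continuousAt.preimage_mem_nhds hU))
  obtain ⟨η, hη, hη_small⟩ := Metric.eventually_nhds_iff_ball.mp
    (eventually_nhdsWithin_iff.mp (hequi _ (Metric.dist_mem_uniformity hρ)))
  filter_upwards [Metric.ball_mem_nhds 0 (lt_min (lt_min hρ hη) hε)]
    with t ht t₁ t₂ ht₁ ht₂ hsum i₁ i₂
  simp only [mem_ball_zero_iff, Real.norm_eq_abs, lt_min_iff] at ht
  have ht₁ρ : t₁ < ρ := by linarith [le_abs_self t]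
  have ht₂ρ : t₂ < ρ := by linarith [le_abs_self t]
  set y := f i₂ (t₂, 0)
  have hinner := hρ_est (t₂, 0) (by simpa [Prod.norm_def, abs_of_nonneg ht₂] using ⟨ht₂ρ, hρ⟩)
  have hy : ‖y‖ < ρ := by
    have ht₂η : t₂ < η := by linarith [le_abs_self t]
    have hclose := hη_small (t₂, 0) (by simpa [Prod.norm_def, abs_of_nonneg ht₂] using
      ⟨ht₂η, hη⟩) ⟨⟨ht₂, by linarith [le_abs_self t]⟩, h0U⟩ i₂
    have hf0 : f i₂ 0 = 0 := Prod.mk_zero_zero (M := ℝ) (N := E) ▸ hfx i₂ 0 h0U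
    simpa [hf0] using hclose
  have houter := hρ_est (t₁, y) (by simpa [Prod.norm_def, abs_of_nonneg ht₁] using ⟨ht₁ρ, hy⟩)
  have h1 := houter.1 i₁ ht₁
  have h2 := hinner.1 i₂ ht₂
  simp only [hfx i₁ y houter.2, hfx i₂ 0 h0U, sub_zero] at h1 h2
  calc _ = ‖(f i₁ (t₁, y) - y - t₁ • derivWithin (fun t => f i₁ (t, 0)) (Ici 0) 0)
        + (y - t₂ • derivWithin (fun t => f i₂ (t, 0)) (Ici 0) 0)‖ := by congr 1; abel
    _ ≤ δ * t₁ + δ * t₂ := (norm_add_le _ _).trans (add_le_add h1 h2)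
    _ = δ * t := by rw [← mul_add, hsum]

end

theorem mem_closure_convexHull_range_of_tendsto_slope {E ι : Type*} [NormedAddCommGroup E]
    [NormedSpace ℝ E] {α : ℝ → E} {v : E} {w : ι → E}
    (hα : Tendsto (slope α 0) (𝓝[>] 0) (𝓝 v))
    (hest : ∀ δ > 0, ∃ᶠ t in 𝓝[>] 0, ∃ t₁ t₂, 0 ≤ t₁ ∧ 0 ≤ t₂ ∧ t₁ + t₂ = t ∧ ∃ i₁ i₂,
      ‖α t - α 0 - t₁ • w i₁ - t₂ • w i₂‖ ≤ δ * t) :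
    v ∈ closure (convexHull ℝ (range w)) := by
  refine Metric.mem_closure_iff.mpr fun δ hδ => ?_
  obtain ⟨t, ⟨t₁, t₂, ht₁, ht₂, hsum, i₁, i₂, hle⟩, hslope, ht⟩ :=
    ((hest (δ / 2) (half_pos hδ)).and_eventually
      ((hα.eventually (Metric.ball_mem_nhds v (half_pos hδ))).and self_mem_nhdsWithin)).exists
  have ht : 0 < t := ht
  set c := (t₁ / t) • w i₁ + (t₂ / t) • w i₂
  have hc : c ∈ convexHull ℝ (range w) :=
    convex_convexHull ℝ _ (subset_convexHull ℝ _ (mem_range_self i₁))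
      (subset_convexHull ℝ _ (mem_range_self i₂)) (div_nonneg ht₁ ht.le)
      (div_nonneg ht₂ ht.le) (by rw [← add_div, hsum, div_self ht.ne'])
  have hslope_c : slope α 0 t - c = t⁻¹ • (α t - α 0 - t₁ • w i₁ - t₂ • w i₂) := by
    simp only [c, slope_def_module, sub_zero, smul_sub, div_eq_inv_mul, mul_smul]
    abel
  have hdist : dist (slope α 0 t) c ≤ δ / 2 := by
    rw [dist_eq_norm, hslope_c, norm_smul, norm_inv, Real.norm_of_nonneg ht.le,
      inv_mul_le_iff₀ ht]
    linarith
  refine ⟨c, hc, ?_⟩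
  calc dist v c ≤ dist v (slope α 0 t) + dist (slope α 0 t) c := dist_triangle _ _ _
    _ < δ / 2 + δ / 2 := add_lt_add_of_lt_of_le (by rwa [dist_comm]) hdist
    _ = δ := add_halves δ

theorem two_flow_derivative_in_closed_convex_hull_general {k : ℕ} {I : Type*}
    (ε T : ℝ) (hε : 0 < ε) (hT : 0 < T)
    (U : Set (Fin k → ℝ)) (hU : IsOpen U) (h0U : (0 : Fin k → ℝ) ∈ U)
    (f : I → ℝ × (Fin k → ℝ) → (Fin k → ℝ))
    (hf : ∀ i, ContDiffOn ℝ 1 (f i) (Set.Ico 0 ε ×ˢ U))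
    (hfx : ∀ i, ∀ x ∈ U, f i (0, x) = x)
    -- sequential compactness of the family in the C¹ topology on compact subsets
    (hcpt : ∀ s : ℕ → I, ∃ σ : ℕ → ℕ, StrictMono σ ∧ ∃ i₀ : I,
      ∀ K : Set (ℝ × (Fin k → ℝ)), IsCompact K → K ⊆ Set.Ico 0 ε ×ˢ U →
        TendstoUniformlyOn (fun n => f (s (σ n))) (f i₀) Filter.atTop K ∧
        TendstoUniformlyOn
          (fun n p => fderivWithin ℝ (f (s (σ n))) (Set.Ico 0 ε ×ˢ U) p)
          (fun p => fderivWithin ℝ (f i₀) (Set.Ico 0 ε ×ˢ U) p) Filter.atTop K)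
    (α : ℝ → (Fin k → ℝ)) (hα0 : α 0 = 0)
    (v : Fin k → ℝ) (hαd : HasDerivWithinAt α v (Set.Ici 0) 0)
    (hαf : ∀ t ∈ Set.Ioo 0 T, ∃ t₁ t₂ : ℝ, 0 ≤ t₁ ∧ 0 ≤ t₂ ∧ t₁ + t₂ = t ∧
      ∃ i₁ i₂ : I, α t = f i₁ (t₁, f i₂ (t₂, 0))) :
    v ∈ closure (convexHull ℝ
      {w : Fin k → ℝ | ∃ i : I,
        w = derivWithin (fun t => f i (t, (0 : Fin k → ℝ))) (Set.Ici 0) 0}) := by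
  set D := Ico 0 ε ×ˢ U
  have hU0 : U ∈ 𝓝 0 := hU.mem_nhds h0U
  obtain ⟨K, hKc, hKD, hK⟩ := exists_isCompact_subset_mem_nhdsWithin_Ico_prod hε hU0
  have h0D : (0 : ℝ × (Fin k → ℝ)) ∈ D := ⟨⟨le_rfl, hε⟩, h0U⟩
  have h0K : (0 : ℝ × (Fin k → ℝ)) ∈ K := mem_of_mem_nhdsWithin h0D hK
  have hequi : EquicontinuousWithinAt f D 0 :=
    (equicontinuousWithinAt_of_forall_subseq_tendstoUniformlyOn h0K
      (fun i => (hf i).continuousOn.continuousWithinAt (hKD h0K) |>.mono hKD)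
      fun s => by
        obtain ⟨σ, hσ, i₀, hlim⟩ := hcpt s
        exact ⟨σ, hσ, i₀, (hlim K hKc hKD).1⟩).mono_of_mem_nhdsWithin hK
  have hequi' : EquicontinuousWithinAt (fun i => fderivWithin ℝ (f i) D) D 0 :=
    (equicontinuousWithinAt_of_forall_subseq_tendstoUniformlyOn h0K
      (fun i => ((hf i).continuousOn_fderivWithin
        ((uniqueDiffOn_Ico 0 ε).prod hU.uniqueDiffOn) le_rfl).continuousWithinAt (hKD h0K)
          |>.mono hKD)
      fun s => by
        obtain ⟨σ, hσ, i₀, hlim⟩ := hcpt s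
        exact ⟨σ, hσ, i₀, (hlim K hKc hKD).2⟩).mono_of_mem_nhdsWithin hK
  have hslope : Tendsto (slope α 0) (𝓝[>] 0) (𝓝 v) :=
    (hasDerivWithinAt_iff_tendsto_slope' (lt_irrefl 0)).mp hαd.Ioi_of_Ici
  have hV : {w : Fin k → ℝ | ∃ i : I,
      w = derivWithin (fun t => f i (t, (0 : Fin k → ℝ))) (Set.Ici 0) 0} =
      range fun i => derivWithin (fun t => f i (t, 0)) (Ici 0) 0 := by
    ext; simp [eq_comm]
  rw [hV]
  refine mem_closure_convexHull_range_of_tendsto_slope hslope fun δ hδ => ?_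
  have hest := eventually_norm_two_flow_sub_le hε hU0
    (fun i => (hf i).differentiableOn one_ne_zero) hfx hequi hequi' hδ
  refine ((hest.filter_mono nhdsWithin_le_nhds).and (Ioo_mem_nhdsGT hT)).frequently.mono ?_
  rintro t ⟨hest, ht⟩
  obtain ⟨t₁, t₂, ht₁, ht₂, hsum, i₁, i₂, hαt⟩ := hαf t ht
  exact ⟨t₁, t₂, ht₁, ht₂, hsum, i₁, i₂, by
    rw [hα0, sub_zero, hαt]; exact hest t₁ t₂ ht₁ ht₂ hsum i₁ i₂⟩

theorem two_flow_derivative_in_closed_convex_hull {k : ℕ} {I : Type*} [Nonempty I]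
    (ε T : ℝ) (hε : 0 < ε) (hT : 0 < T)
    (U : Set (Fin k → ℝ)) (hU : IsOpen U) (h0U : (0 : Fin k → ℝ) ∈ U)
    (f : I → ℝ × (Fin k → ℝ) → (Fin k → ℝ))
    (hf : ∀ i, ContDiffOn ℝ 1 (f i) (Set.Ico 0 ε ×ˢ U))
    (hfx : ∀ i, ∀ x ∈ U, f i (0, x) = x)
    -- sequential compactness of the family in the C¹ topology on compact subsets
    (hcpt : ∀ s : ℕ → I, ∃ σ : ℕ → ℕ, StrictMono σ ∧ ∃ i₀ : I,
      ∀ K : Set (ℝ × (Fin k → ℝ)), IsCompact K → K ⊆ Set.Ico 0 ε ×ˢ U →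
        TendstoUniformlyOn (fun n => f (s (σ n))) (f i₀) Filter.atTop K ∧
        TendstoUniformlyOn
          (fun n p => fderivWithin ℝ (f (s (σ n))) (Set.Ico 0 ε ×ˢ U) p)
          (fun p => fderivWithin ℝ (f i₀) (Set.Ico 0 ε ×ˢ U) p) Filter.atTop K)
    (α : ℝ → (Fin k → ℝ)) (hα0 : α 0 = 0)
    (v : Fin k → ℝ) (hαd : HasDerivWithinAt α v (Set.Ici 0) 0)
    (hαf : ∀ t ∈ Set.Ioo 0 T, ∃ t₁ t₂ : ℝ, 0 ≤ t₁ ∧ 0 ≤ t₂ ∧ t₁ + t₂ = t ∧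
      ∃ i₁ i₂ : I, α t = f i₁ (t₁, f i₂ (t₂, 0))) :
    v ∈ closure (convexHull ℝ
      {w : Fin k → ℝ | ∃ i : I,
        w = derivWithin (fun t => f i (t, (0 : Fin k → ℝ))) (Set.Ici 0) 0}) :=
  two_flow_derivative_in_closed_convex_hull_general ε T hε hT U hU h0U f hf hfx hcpt α hα0 v hαd hαf
end
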